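/- arXiv:2211.07860 — 2 statements merged into one kernel-verified Lean document; each statement's English description precedes it below -/
import Mathlib

section
/- (Infeasibility criterion.) Let M ≥ 1 and let I, F, L₀, c₁, c₂, T̄ > 0 and U_m, D_m, d_m > 0 for m ∈ {1,…,M}. If (1/M)·[ I·(∑_m 1/√(U_m))² + (∑_m √(d_m/D_m))² + (1/F)·(∑_m √(L₀ + c₁ d_m))² ] > T̄, then there exist no α, β, f, q with α_m, β_m, f_m, q_m > 0, ∑_m α_m ≤ 1, ∑_m β_m ≤ 1, ∑_m f_m ≤ F satisfying the average-latency constraint (1/M)·∑_m [ I/(α_m U_m) + d_m/(β_m D_m) + (L₀ + c₁ d_m)/f_m + c₂ d_m/q_m ] ≤ T̄. -/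
open Finset

lemma cs_key (M : ℕ) (a w : Fin M → ℝ) (ha : ∀ m, 0 < a m) (hw : ∀ m, 0 < w m) :
    (∑ m, Real.sqrt (a m)) ^ 2 ≤ (∑ m, w m) * ∑ m, a m / w m := by
  have h : (∑ m, Real.sqrt (a m)) = ∑ m, Real.sqrt (w m) * Real.sqrt (a m / w m) := by
    refine Finset.sum_congr rfl fun m _ => ?_
    rw [← Real.sqrt_mul (le_of_lt (hw m)), mul_div_cancel₀ _ (ne_of_gt (hw m))]
  rw [h]
  have := Finset.sum_mul_sq_le_sq_mul_sq univ (fun m => Real.sqrt (w m))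
    (fun m => Real.sqrt (a m / w m))
  refine this.trans_eq ?_
  congr 1
  · exact Finset.sum_congr rfl fun m _ => Real.sq_sqrt (hw m).le
  · exact Finset.sum_congr rfl fun m _ =>
      Real.sq_sqrt (div_nonneg (ha m).le (hw m).le)

/-- Infeasibility criterion: if the minimum achievable average communication-plus-edge
latency already exceeds `T̄`, then no feasible allocation `(α,β,f,q)` can satisfy the
average end-to-end latency constraint. -/
theorem stmt_6 (M : ℕ) (hM : 1 ≤ M) (I F L₀ c₁ c₂ Tbar : ℝ)
    (hI : 0 < I) (hF : 0 < F) (hL₀ : 0 < L₀) (hc₁ : 0 < c₁) (hc₂ : 0 < c₂)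
    (hT : 0 < Tbar) (U D d : Fin M → ℝ)
    (hU : ∀ m, 0 < U m) (hD : ∀ m, 0 < D m) (hd : ∀ m, 0 < d m)
    (hbig : Tbar < (1 / (M : ℝ)) * (I * (∑ m, 1 / Real.sqrt (U m)) ^ 2 +
      (∑ m, Real.sqrt (d m / D m)) ^ 2 +
      (1 / F) * (∑ m, Real.sqrt (L₀ + c₁ * d m)) ^ 2)) :
    ¬ ∃ (α β f q : Fin M → ℝ), (∀ m, 0 < α m) ∧ (∀ m, 0 < β m) ∧
      (∀ m, 0 < f m) ∧ (∀ m, 0 < q m) ∧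
      (∑ m, α m ≤ 1) ∧ (∑ m, β m ≤ 1) ∧ (∑ m, f m ≤ F) ∧
      (1 / (M : ℝ)) * ∑ m, (I / (α m * U m) + d m / (β m * D m) +
        (L₀ + c₁ * d m) / f m + c₂ * d m / q m) ≤ Tbar := by
  rintro ⟨α, β, f, q, hα, hβ, hf, hq, hαs, hβs, hfs, hlat⟩
  have hMpos : (0:ℝ) < M := by exact_mod_cast Nat.lt_of_lt_of_le Nat.zero_lt_one hM
  -- term 1
  have h1 : I * (∑ m, 1 / Real.sqrt (U m)) ^ 2 ≤ ∑ m, I / (α m * U m) := by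
    have key := cs_key M (fun m => I / U m) α (fun m => div_pos hI (hU m)) hα
    have e1 : (∑ m, Real.sqrt (I / U m)) ^ 2 = I * (∑ m, 1 / Real.sqrt (U m)) ^ 2 := by
      have : (∑ m, Real.sqrt (I / U m)) = Real.sqrt I * ∑ m, 1 / Real.sqrt (U m) := by
        rw [Finset.mul_sum]
        refine Finset.sum_congr rfl fun m _ => ?_
        rw [Real.sqrt_div hI.le, div_eq_mul_one_div]
      rw [this, mul_pow, Real.sq_sqrt hI.le]
    have e2 : ∀ m, (I / U m) / α m = I / (α m * U m) := by
      intro m; field_simp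
    calc I * (∑ m, 1 / Real.sqrt (U m)) ^ 2 = (∑ m, Real.sqrt (I / U m)) ^ 2 := e1.symm
      _ ≤ (∑ m, α m) * ∑ m, (I / U m) / α m := key
      _ ≤ 1 * ∑ m, (I / U m) / α m := by
          apply mul_le_mul_of_nonneg_right hαs
          exact Finset.sum_nonneg fun m _ => (div_pos (div_pos hI (hU m)) (hα m)).le
      _ = ∑ m, I / (α m * U m) := by
          rw [one_mul]; exact Finset.sum_congr rfl fun m _ => e2 m
  -- term 2
  have h2 : (∑ m, Real.sqrt (d m / D m)) ^ 2 ≤ ∑ m, d m / (β m * D m) := by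
    have key := cs_key M (fun m => d m / D m) β (fun m => div_pos (hd m) (hD m)) hβ
    calc (∑ m, Real.sqrt (d m / D m)) ^ 2
        ≤ (∑ m, β m) * ∑ m, (d m / D m) / β m := key
      _ ≤ 1 * ∑ m, (d m / D m) / β m := by
          apply mul_le_mul_of_nonneg_right hβs
          exact Finset.sum_nonneg fun m _ => (div_pos (div_pos (hd m) (hD m)) (hβ m)).le
      _ = ∑ m, d m / (β m * D m) := by
          rw [one_mul]; refine Finset.sum_congr rfl fun m _ => ?_; field_simp
  -- term 3
  have h3 : (1 / F) * (∑ m, Real.sqrt (L₀ + c₁ * d m)) ^ 2 ≤ ∑ m, (L₀ + c₁ * d m) / f m := by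
    have ha : ∀ m, 0 < L₀ + c₁ * d m := fun m => add_pos hL₀ (mul_pos hc₁ (hd m))
    have key := cs_key M (fun m => L₀ + c₁ * d m) f ha hf
    have hpos : 0 ≤ ∑ m, (L₀ + c₁ * d m) / f m :=
      Finset.sum_nonneg fun m _ => (div_pos (ha m) (hf m)).le
    rw [div_mul_eq_mul_div, one_mul, div_le_iff₀ hF, mul_comm (∑ m, (L₀ + c₁ * d m) / f m) F]
    calc (∑ m, Real.sqrt (L₀ + c₁ * d m)) ^ 2
        ≤ (∑ m, f m) * ∑ m, (L₀ + c₁ * d m) / f m := key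
      _ ≤ F * ∑ m, (L₀ + c₁ * d m) / f m := mul_le_mul_of_nonneg_right hfs hpos
  -- term 4 nonneg
  have h4 : 0 ≤ ∑ m, c₂ * d m / q m :=
    Finset.sum_nonneg fun m _ => (div_pos (mul_pos hc₂ (hd m)) (hq m)).le
  have hsum : I * (∑ m, 1 / Real.sqrt (U m)) ^ 2 + (∑ m, Real.sqrt (d m / D m)) ^ 2 +
      (1 / F) * (∑ m, Real.sqrt (L₀ + c₁ * d m)) ^ 2 ≤
      ∑ m, (I / (α m * U m) + d m / (β m * D m) + (L₀ + c₁ * d m) / f m + c₂ * d m / q m) := by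
    rw [Finset.sum_add_distrib, Finset.sum_add_distrib, Finset.sum_add_distrib]
    have := add_le_add (add_le_add h1 h2) h3
    linarith
  have : Tbar < Tbar := by
    calc Tbar < (1 / (M : ℝ)) * (I * (∑ m, 1 / Real.sqrt (U m)) ^ 2 +
        (∑ m, Real.sqrt (d m / D m)) ^ 2 +
        (1 / F) * (∑ m, Real.sqrt (L₀ + c₁ * d m)) ^ 2) := hbig
      _ ≤ (1 / (M : ℝ)) * ∑ m, (I / (α m * U m) + d m / (β m * D m) +
          (L₀ + c₁ * d m) / f m + c₂ * d m / q m) := by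
          apply mul_le_mul_of_nonneg_left hsum
          positivity
      _ ≤ Tbar := hlat
  exact lt_irrefl _ this
end

section
/- (Proposition 2, multi-user form.) Let M ≥ 1, ψ > 0, c₂ > 0, d_m > 0, Q_m > 0 for m ∈ {1,…,M}, and let R > ∑_m c₂·d_m/Q_m. Let t* > 0 be such that ∑_m c₂·d_m / min{t*, Q_m} = R, and set q*_m = min{t*, Q_m}. Then q* minimizes the total local computation energy ∑_m ψ·(q_m)²·c₂·d_m over all q with 0 < q_m ≤ Q_m for all m and ∑_m c₂·d_m/q_m ≤ R. -/
open Finset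

lemma key_pt (t Qm q : ℝ) (ht : 0 < t) (hQm : 0 < Qm) (hq : 0 < q) (hqQ : q ≤ Qm) :
    (min t Qm) ^ 2 + 2 * t ^ 3 / (min t Qm) ≤ q ^ 2 + 2 * t ^ 3 / q := by
  rcases le_total t Qm with h | h
  · rw [min_eq_left h]
    have hN : t * (3 * t ^ 2) * q ≤ (q ^ 2 * q + 2 * t ^ 3) * t := by
      nlinarith [sq_nonneg (q - t), mul_pos hq ht]
    have e1 : t ^ 2 + 2 * t ^ 3 / t = 3 * t ^ 2 := by field_simp; ring
    rw [e1]
    have h2 : (3 * t ^ 2 - q ^ 2) * q ≤ 2 * t ^ 3 := by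
      nlinarith [sq_nonneg (q - t), mul_pos hq ht]
    have h3 : 3 * t ^ 2 - q ^ 2 ≤ 2 * t ^ 3 / q := (le_div_iff₀ hq).mpr h2
    linarith
  · rw [min_eq_right h]
    have hdiff : q ^ 2 + 2 * t ^ 3 / q - (Qm ^ 2 + 2 * t ^ 3 / Qm)
        = ((q ^ 2 - Qm ^ 2) * (q * Qm) + 2 * t ^ 3 * (Qm - q)) / (q * Qm) := by
      field_simp; ring
    have hqt : q ≤ t := hqQ.trans h
    have h2 : q * Qm * (q + Qm) ≤ 2 * t ^ 3 := by
      nlinarith [mul_nonneg (sub_nonneg.mpr hqt) (sub_nonneg.mpr h), hq.le, hQm.le,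
        mul_nonneg hq.le hQm.le, mul_nonneg (mul_nonneg hq.le hQm.le) (sub_nonneg.mpr h),
        mul_nonneg (sub_nonneg.mpr hqt) hQm.le]
    have hprod := mul_nonneg (sub_nonneg.mpr hqQ) (sub_nonneg.mpr h2)
    have hnum : 0 ≤ (q ^ 2 - Qm ^ 2) * (q * Qm) + 2 * t ^ 3 * (Qm - q) := by nlinarith [hprod]
    have := div_nonneg hnum (mul_pos hq hQm).le
    linarith [hdiff ▸ this]

/-- Proposition 2, multi-user form: if `t* > 0` is the common threshold with
`∑ₘ c₂ dₘ / min{t*, Qₘ} = R`, then `q*ₘ = min{t*, Qₘ}` is feasible and minimizes the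
total local computation energy `∑ₘ ψ qₘ² c₂ dₘ` over all feasible speed profiles. -/
theorem stmt_11 (M : ℕ) (hM : 1 ≤ M) (ψ c₂ : ℝ) (hψ : 0 < ψ) (hc₂ : 0 < c₂)
    (d Q : Fin M → ℝ) (hd : ∀ m, 0 < d m) (hQ : ∀ m, 0 < Q m)
    (R : ℝ) (hR : ∑ m, c₂ * d m / Q m < R)
    (tstar : ℝ) (htstar : 0 < tstar)
    (hsum : ∑ m, c₂ * d m / min tstar (Q m) = R)
    (qstar : Fin M → ℝ) (hqstar : ∀ m, qstar m = min tstar (Q m)) :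
    ((∀ m, 0 < qstar m) ∧ (∀ m, qstar m ≤ Q m) ∧ ∑ m, c₂ * d m / qstar m ≤ R) ∧
    (∀ q : Fin M → ℝ, (∀ m, 0 < q m) → (∀ m, q m ≤ Q m) →
      ∑ m, c₂ * d m / q m ≤ R →
      ∑ m, ψ * (qstar m) ^ 2 * c₂ * d m ≤ ∑ m, ψ * (q m) ^ 2 * c₂ * d m) := by
  have hq0 : ∀ m, 0 < qstar m := fun m => (hqstar m) ▸ lt_min htstar (hQ m)
  have hsumstar : ∑ m, c₂ * d m / qstar m = R := by
    rw [← hsum]; exact Finset.sum_congr rfl fun m _ => by rw [hqstar m]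
  refine ⟨⟨hq0, fun m => (hqstar m) ▸ min_le_right _ _, le_of_eq hsumstar⟩, ?_⟩
  intro q hq1 hq2 hq3
  have hpt : ∀ m ∈ Finset.univ,
      ψ * (qstar m) ^ 2 * c₂ * d m + 2 * ψ * tstar ^ 3 * (c₂ * d m / qstar m)
      ≤ ψ * (q m) ^ 2 * c₂ * d m + 2 * ψ * tstar ^ 3 * (c₂ * d m / q m) := by
    intro m _
    have hk := key_pt tstar (Q m) (q m) htstar (hQ m) (hq1 m) (hq2 m)
    rw [← hqstar m] at hk
    have hc : (0:ℝ) ≤ ψ * (c₂ * d m) := mul_nonneg hψ.le (mul_nonneg hc₂.le (hd m).le)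
    have e1 : ∀ x : ℝ, x ≠ 0 →
        ψ * x ^ 2 * c₂ * d m + 2 * ψ * tstar ^ 3 * (c₂ * d m / x)
        = ψ * (c₂ * d m) * (x ^ 2 + 2 * tstar ^ 3 / x) := by
      intro x hx; field_simp
    rw [e1 _ (hq0 m).ne', e1 _ (hq1 m).ne']
    exact mul_le_mul_of_nonneg_left hk hc
  have hsum1 := Finset.sum_le_sum hpt
  rw [Finset.sum_add_distrib, Finset.sum_add_distrib, ← Finset.mul_sum, ← Finset.mul_sum,
    hsumstar] at hsum1
  have hcoef : (0:ℝ) ≤ 2 * ψ * tstar ^ 3 := by positivity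
  have : 2 * ψ * tstar ^ 3 * (∑ m, c₂ * d m / q m) ≤ 2 * ψ * tstar ^ 3 * R :=
    mul_le_mul_of_nonneg_left hq3 hcoef
  linarith
end
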